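/- Let x ∈ ℝ² have irrational slope ξ. Then μ(x, 0) = 1, where μ(x,y) is the supremum of real numbers μ such that |γx − y| ≤ |γ|^{−μ} has infinitely many solutions γ ∈ SL(2,ℤ). -/

import Mathlib

open Matrix MeasureTheory

/-- Denominator `q k` of the `k`-th convergent of the continued fraction of `ξ`. -/
noncomputable def qden (ξ : ℝ) (k : ℕ) : ℝ := (GenContFract.of ξ).dens k

/-- Numerator `p k` of the `k`-th convergent of the continued fraction of `ξ`. -/
noncomputable def pnum (ξ : ℝ) (k : ℕ) : ℝ := (GenContFract.of ξ).nums k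

/-- Action of an integer matrix on `ℝ²` by left multiplication. -/
noncomputable def act (g : Matrix (Fin 2) (Fin 2) ℤ) (x : Fin 2 → ℝ) : Fin 2 → ℝ :=
  (g.map (Int.cast : ℤ → ℝ)).mulVec x

/-- Sup norm of an integer `2 × 2` matrix. -/
noncomputable def mnorm (g : Matrix (Fin 2) (Fin 2) ℤ) : ℝ :=
  max (max |(g 0 0 : ℝ)| |(g 0 1 : ℝ)|) (max |(g 1 0 : ℝ)| |(g 1 1 : ℝ)|)

/-- Sup norm on `ℝ²`. -/
noncomputable def vnorm (v : Fin 2 → ℝ) : ℝ := max |v 0| |v 1|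

/-- The set of exponents `w` such that `|v α + u| ≤ |v| ^ (-w)` has infinitely many
integer solutions `(v, u)`; its supremum is the irrationality measure `ω(α)`. -/
def omegaSet (α : ℝ) : Set ℝ :=
  {w : ℝ | {p : ℤ × ℤ | |(p.1 : ℝ) * α + (p.2 : ℝ)| ≤ |(p.1 : ℝ)| ^ (-w)}.Infinite}

/-- The set of exponents `μ` such that `|γ x - y| ≤ |γ| ^ (-μ)` for infinitely many
`γ ∈ SL(2, ℤ)`; its supremum is `μ(x, y)`. -/
def muSet (x y : Fin 2 → ℝ) : Set ℝ :=
  {μ : ℝ | {γ : Matrix (Fin 2) (Fin 2) ℤ |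
    γ.det = 1 ∧ vnorm (act γ x - y) ≤ mnorm γ ^ (-μ)}.Infinite}

/-- The set of exponents `μ` such that for all sufficiently large `T` there is
`γ ∈ SL(2, ℤ)` with `|γ| ≤ T` and `|γ x - y| ≤ T ^ (-μ)`; its supremum is `μ̂(x, y)`. -/
def muHatSet (x y : Fin 2 → ℝ) : Set ℝ :=
  {μ : ℝ | ∃ T₀ : ℝ, ∀ T : ℝ, T₀ ≤ T → ∃ γ : Matrix (Fin 2) (Fin 2) ℤ,
    γ.det = 1 ∧ mnorm γ ≤ T ∧ vnorm (act γ x - y) ≤ T ^ (-μ)}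


/-! For `γ ∈ SL(2, ℤ)` the inverse `γ⁻¹` has the entries of `γ` up to sign, so
`|x| ≤ 2 |γ| |γ x|`; if `|γ x| ≤ |γ| ^ (-μ)` this gives `|x| ≤ 2 |γ| ^ (1 - μ)`, and since only
finitely many `γ` have bounded norm, `μ > 1` is impossible.

Conversely, with `ξ = x₀ / x₁`, every good rational approximation `p / q` of `ξ`
(`|ξ - p / q| < 1 / q²`, infinitely many by irrationality) completes to a matrix of `SL(2, ℤ)`
with rows `(q, -p)` and `(a, b)`, where `0 ≤ a < q`. Both rows vanish on `(ξ, 1)` up to `2 / q`,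
so `|γ x| ≪ 1 / q` while `q ≤ |γ| ≪ q`; letting `q → ∞` gives every `μ < 1`. -/

lemma abs_entry_le_mnorm (γ : Matrix (Fin 2) (Fin 2) ℤ) (i j : Fin 2) :
    |(γ i j : ℝ)| ≤ mnorm γ := by
  unfold mnorm
  fin_cases i <;> fin_cases j <;> simp

lemma mnorm_le_of_forall_abs_le {γ : Matrix (Fin 2) (Fin 2) ℤ} {B : ℝ}
    (h : ∀ i j, |(γ i j : ℝ)| ≤ B) : mnorm γ ≤ B :=
  max_le (max_le (h 0 0) (h 0 1)) (max_le (h 1 0) (h 1 1))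

lemma finite_setOf_mnorm_le (B : ℝ) : {γ : Matrix (Fin 2) (Fin 2) ℤ | mnorm γ ≤ B}.Finite := by
  refine (Set.Finite.pi' fun _ => Set.Finite.pi' fun _ => Set.finite_Icc (-⌈B⌉) ⌈B⌉).subset ?_
  intro γ hγ i j
  have h : |γ i j| ≤ ⌈B⌉ := by
    exact_mod_cast ((abs_entry_le_mnorm γ i j).trans hγ).trans (Int.le_ceil B)
  exact abs_le.mp h

lemma infinite_iff_forall_exists_lt_mnorm {S : Set (Matrix (Fin 2) (Fin 2) ℤ)} :
    S.Infinite ↔ ∀ B, ∃ γ ∈ S, B < mnorm γ := by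
  refine ⟨fun hS B => ?_, fun h hS => ?_⟩
  · obtain ⟨γ, hγS, hγB⟩ := (hS.sdiff (finite_setOf_mnorm_le B)).nonempty
    exact ⟨γ, hγS, not_le.mp hγB⟩
  · obtain ⟨B, hB⟩ := (hS.image mnorm).bddAbove
    obtain ⟨γ, hγS, hγB⟩ := h B
    exact hγB.not_ge (hB ⟨γ, hγS, rfl⟩)

lemma mem_muSet_iff {x y : Fin 2 → ℝ} {μ : ℝ} :
    μ ∈ muSet x y ↔ ∀ B, ∃ γ : Matrix (Fin 2) (Fin 2) ℤ,
      γ.det = 1 ∧ B < mnorm γ ∧ vnorm (act γ x - y) ≤ mnorm γ ^ (-μ) := by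
  simp only [muSet, Set.mem_ofPred_eq, infinite_iff_forall_exists_lt_mnorm]
  exact forall_congr' fun B => exists_congr fun γ => by tauto

lemma act_apply (γ : Matrix (Fin 2) (Fin 2) ℤ) (x : Fin 2 → ℝ) (i : Fin 2) :
    act γ x i = γ i 0 * x 0 + γ i 1 * x 1 := by
  simp [act, Matrix.mulVec, dotProduct, Fin.sum_univ_two]

lemma vnorm_pos {v : Fin 2 → ℝ} (hv : v ≠ 0) : 0 < vnorm v := by
  contrapose! hv
  have h0 : |v 0| ≤ 0 := (le_max_left _ _).trans hv
  have h1 : |v 1| ≤ 0 := (le_max_right _ _).trans hv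
  ext i
  fin_cases i <;> simpa using abs_nonpos_iff.mp ‹_›

lemma vnorm_le_two_mul_mnorm_mul_vnorm_act {γ : Matrix (Fin 2) (Fin 2) ℤ} (hdet : γ.det = 1)
    (v : Fin 2 → ℝ) : vnorm v ≤ 2 * mnorm γ * vnorm (act γ v) := by
  set w := act γ v
  have hdet' : (γ 0 0 : ℝ) * γ 1 1 - γ 0 1 * γ 1 0 = 1 := by
    rw [Matrix.det_fin_two] at hdet; exact_mod_cast hdet
  have hN : 0 ≤ mnorm γ := (abs_nonneg _).trans (abs_entry_le_mnorm γ 0 0)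
  have hw (a b : Fin 2) (c d : ℝ) (hc : |c| ≤ mnorm γ) (hd : |d| ≤ mnorm γ) :
      |c * w a - d * w b| ≤ 2 * mnorm γ * vnorm w := by
    have ha : |w a| ≤ vnorm w := by fin_cases a <;> simp [vnorm]
    have hb : |w b| ≤ vnorm w := by fin_cases b <;> simp [vnorm]
    calc |c * w a - d * w b| ≤ |c| * |w a| + |d| * |w b| := by
          rw [← abs_mul, ← abs_mul]; exact abs_sub _ _
      _ ≤ mnorm γ * vnorm w + mnorm γ * vnorm w := by gcongr
      _ = 2 * mnorm γ * vnorm w := by ring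
  have hv0 : v 0 = γ 1 1 * w 0 - γ 0 1 * w 1 := by
    simp only [w, act_apply]; linear_combination (-v 0) * hdet'
  have hv1 : v 1 = γ 0 0 * w 1 - γ 1 0 * w 0 := by
    simp only [w, act_apply]; linear_combination (-v 1) * hdet'
  refine max_le ?_ ?_
  · rw [hv0]; exact hw 0 1 _ _ (abs_entry_le_mnorm γ 1 1) (abs_entry_le_mnorm γ 0 1)
  · rw [hv1]; exact hw 1 0 _ _ (abs_entry_le_mnorm γ 0 0) (abs_entry_le_mnorm γ 1 0)

open Filter in
lemma le_one_of_mem_muSet_zero {x : Fin 2 → ℝ} (hx : x ≠ 0) {μ : ℝ} (hμ : μ ∈ muSet x 0) :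
    μ ≤ 1 := by
  by_contra! hμ1
  have hsmall : ∀ᶠ t : ℝ in atTop, 2 * t ^ (-(μ - 1)) < vnorm x := by
    refine ((tendsto_rpow_neg_atTop (by linarith)).const_mul 2).eventually_lt_const ?_
    simpa using vnorm_pos hx
  obtain ⟨B, hB⟩ := eventually_atTop.mp hsmall
  obtain ⟨γ, hdet, hBγ, hγ⟩ := mem_muSet_iff.mp hμ (max B 0)
  have hN : 0 < mnorm γ := (le_max_right B 0).trans_lt hBγ
  rw [sub_zero] at hγ
  have hbound : vnorm x ≤ 2 * mnorm γ ^ (-(μ - 1)) := calc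
    vnorm x ≤ 2 * mnorm γ * vnorm (act γ x) := vnorm_le_two_mul_mnorm_mul_vnorm_act hdet x
    _ ≤ 2 * mnorm γ * mnorm γ ^ (-μ) := by gcongr
    _ = 2 * mnorm γ ^ (-(μ - 1)) := by
      rw [mul_assoc, neg_sub, Real.rpow_sub hN, Real.rpow_one, Real.rpow_neg hN.le, div_eq_mul_inv]
  exact (hB _ ((le_max_left B 0).trans hBγ.le)).not_ge hbound

lemma finite_setOf_rat_den_le_abs_sub_lt_one (ξ : ℝ) (n : ℕ) :
    {r : ℚ | r.den ≤ n ∧ |ξ - r| < 1}.Finite := by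
  set A := ⌈(|ξ| + 1) * n⌉
  have hinj : Function.Injective fun r : ℚ => (r.num, r.den) := fun a b h =>
    Rat.ext (congrArg Prod.fst h) (congrArg Prod.snd h)
  refine Set.Finite.of_finite_image (((Set.finite_Icc (-A) A).prod (Set.finite_Iic n)).subset ?_)
    hinj.injOn
  rintro _ ⟨r, ⟨hden, hr⟩, rfl⟩
  have hr' : |(r : ℝ)| ≤ |ξ| + 1 := by
    have := abs_sub_abs_le_abs_sub (r : ℝ) ξ
    rw [abs_sub_comm] at this
    linarith
  have hnum : |(r.num : ℝ)| ≤ (|ξ| + 1) * n := by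
    rw [show (r.num : ℝ) = r * r.den by rw [Rat.cast_def]; field_simp, abs_mul, Nat.abs_cast]
    exact mul_le_mul hr' (by exact_mod_cast hden) (by positivity) (by positivity)
  have hA : |r.num| ≤ A := by exact_mod_cast hnum.trans (Int.le_ceil _)
  exact ⟨abs_le.mp hA, hden⟩

lemma exists_rat_abs_sub_lt_one_div_den_sq_lt_den {ξ : ℝ} (hξ : Irrational ξ) (n : ℕ) :
    ∃ r : ℚ, |ξ - r| < 1 / (r.den : ℝ) ^ 2 ∧ n < r.den := by
  obtain ⟨r, hr, hrn⟩ := ((Real.infinite_rat_abs_sub_lt_one_div_den_sq_of_irrational hξ).sdiff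
    (finite_setOf_rat_den_le_abs_sub_lt_one ξ n)).nonempty
  refine ⟨r, hr, ?_⟩
  by_contra! h
  have h1 : 1 / (r.den : ℝ) ^ 2 ≤ 1 :=
    div_le_one_of_le₀ (one_le_pow₀ (by exact_mod_cast r.pos)) (by positivity)
  exact hrn ⟨h, hr.trans_le h1⟩

lemma abs_den_mul_sub_num_lt {ξ : ℝ} {r : ℚ} (h : |ξ - r| < 1 / (r.den : ℝ) ^ 2) :
    |(r.den : ℝ) * ξ - r.num| < 1 / r.den := by
  have hd : (0 : ℝ) < r.den := by exact_mod_cast r.pos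
  have hr : (r.den : ℝ) * ξ - r.num = r.den * (ξ - r) := by rw [Rat.cast_def]; field_simp
  rw [hr, abs_mul, abs_of_pos hd]
  calc (r.den : ℝ) * |ξ - r| < r.den * (1 / (r.den : ℝ) ^ 2) := by gcongr
    _ = 1 / r.den := by field_simp

lemma exists_det_eq_one_of_abs_mul_sub_le {ξ : ℝ} {p q : ℤ} (hq : 0 < q) (hpq : IsCoprime p q)
    (happrox : |q * ξ - p| ≤ 1 / q) :
    ∃ γ : Matrix (Fin 2) (Fin 2) ℤ, γ.det = 1 ∧ γ 0 0 = q ∧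
      ∀ i, |(γ i 0 : ℝ)| ≤ q ∧ |γ i 0 * ξ + γ i 1| ≤ 2 / q := by
  obtain ⟨u, v, huv⟩ := hpq
  have hq' : (0 : ℝ) < q := by exact_mod_cast hq
  have hdet : q * (v + u / q * p) + p * (u % q) = 1 := by
    linear_combination huv + p * Int.emod_add_mul_ediv u q
  refine ⟨!![q, -p; u % q, v + u / q * p], ?_, rfl, fun i => ?_⟩
  · rw [Matrix.det_fin_two_of]; linear_combination hdet
  fin_cases i
  · refine ⟨(abs_of_pos hq').le, ?_⟩
    calc |(q : ℝ) * ξ + ((-p : ℤ) : ℝ)| ≤ 1 / q := by simpa [sub_eq_add_neg] using happrox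
      _ ≤ 2 / q := by gcongr; norm_num
  · set a := u % q
    set b := v + u / q * p
    have ha0 : (0 : ℝ) ≤ a := by exact_mod_cast Int.emod_nonneg u hq.ne'
    have ha : (a : ℝ) ≤ q := by exact_mod_cast (Int.emod_lt_of_pos u hq).le
    have hdet' : (q : ℝ) * b + p * a = 1 := by exact_mod_cast hdet
    have hrow : (a : ℝ) * ξ + b = (a * (q * ξ - p) + 1) / q := by
      field_simp; linear_combination hdet'
    refine ⟨(abs_of_nonneg ha0).trans_le ha, ?_⟩
    change |(a : ℝ) * ξ + b| ≤ 2 / q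
    rw [hrow, abs_div, abs_of_pos hq', div_le_div_iff_of_pos_right hq']
    calc |(a : ℝ) * (q * ξ - p) + 1| ≤ a * (1 / q) + 1 := by
          refine (abs_add_le _ _).trans ?_
          rw [abs_mul, abs_of_nonneg ha0, abs_one]
          gcongr
      _ ≤ 2 := by linarith [mul_one_div (a : ℝ) q ▸ div_le_one_of_le₀ ha hq'.le]

lemma mnorm_le_of_abs_mul_add_le {γ : Matrix (Fin 2) (Fin 2) ℤ} {ξ q : ℝ} (hq : 1 ≤ q)
    (h : ∀ i, |(γ i 0 : ℝ)| ≤ q ∧ |γ i 0 * ξ + γ i 1| ≤ 2 / q) :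
    mnorm γ ≤ (|ξ| + 2) * q := by
  have h2q : 2 / q ≤ 2 * q := by
    rw [div_le_iff₀ (by positivity)]; nlinarith
  refine mnorm_le_of_forall_abs_le fun i => ?_
  obtain ⟨h0, h1⟩ := h i
  refine Fin.forall_fin_two.mpr ⟨?_, ?_⟩
  · nlinarith [abs_nonneg ξ]
  · calc |(γ i 1 : ℝ)| = |(γ i 0 * ξ + γ i 1) - γ i 0 * ξ| := by ring_nf
      _ ≤ |γ i 0 * ξ + γ i 1| + |(γ i 0 : ℝ)| * |ξ| := by rw [← abs_mul]; exact abs_sub _ _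
      _ ≤ 2 / q + q * |ξ| := by gcongr
      _ ≤ (|ξ| + 2) * q := by linarith

lemma vnorm_act_le {x : Fin 2 → ℝ} {ξ ε : ℝ} (hx : x 0 = ξ * x 1) {γ : Matrix (Fin 2) (Fin 2) ℤ}
    (h : ∀ i, |γ i 0 * ξ + γ i 1| ≤ ε) : vnorm (act γ x) ≤ |x 1| * ε := by
  have hrow (i : Fin 2) : |act γ x i| ≤ |x 1| * ε := by
    rw [act_apply, hx, show (γ i 0 : ℝ) * (ξ * x 1) + γ i 1 * x 1 = x 1 * (γ i 0 * ξ + γ i 1) by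
      ring, abs_mul]
    exact mul_le_mul_of_nonneg_left (h i) (abs_nonneg _)
  exact max_le (hrow 0) (hrow 1)

open Filter in
lemma mem_muSet_zero_of_irrational {x : Fin 2 → ℝ} (hx2 : x 1 ≠ 0)
    (hξ : Irrational (x 0 / x 1)) {μ : ℝ} (hμ0 : 0 < μ) (hμ1 : μ < 1) : μ ∈ muSet x 0 := by
  set ξ := x 0 / x 1
  set C := |ξ| + 2
  have hC : 0 < C := by positivity
  obtain ⟨Q, hQ⟩ : ∃ Q : ℝ, ∀ t ≥ Q, 2 * |x 1| * C ≤ (C * t) ^ (1 - μ) :=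
    eventually_atTop.mp (((tendsto_rpow_atTop (by linarith)).comp
      (tendsto_id.const_mul_atTop hC)).eventually_ge_atTop _)
  refine mem_muSet_iff.mpr fun B => ?_
  obtain ⟨r, hr, hden⟩ := exists_rat_abs_sub_lt_one_div_den_sq_lt_den hξ ⌈max B (max Q 1)⌉₊
  set q : ℝ := (r.den : ℝ)
  obtain ⟨hBq, hQq, hq1⟩ : B < q ∧ Q < q ∧ 1 < q := by
    simpa only [max_lt_iff] using Nat.lt_of_ceil_lt hden
  have hCq : 0 < C * q := by positivity
  obtain ⟨γ, hdet, hγq, hrows⟩ := exists_det_eq_one_of_abs_mul_sub_le (mod_cast r.pos)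
    r.isCoprime_num_den (by simpa using (abs_den_mul_sub_num_lt hr).le)
  simp only [Int.cast_natCast] at hrows
  have hq_le : q ≤ mnorm γ := by simpa [hγq, q] using abs_entry_le_mnorm γ 0 0
  have hx : x 0 = ξ * x 1 := (div_mul_cancel₀ _ hx2).symm
  have hQ' := hQ q hQq.le
  rw [sub_eq_add_neg, Real.rpow_add hCq, Real.rpow_one] at hQ'
  refine ⟨γ, hdet, hBq.trans_le hq_le, ?_⟩
  calc vnorm (act γ x - 0) ≤ |x 1| * (2 / q) := by
        rw [sub_zero]; exact vnorm_act_le hx fun i => (hrows i).2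
    _ = 2 * |x 1| * C / (C * q) := by field_simp
    _ ≤ (C * q) ^ (-μ) := by rw [div_le_iff₀ hCq]; linarith
    _ ≤ mnorm γ ^ (-μ) := Real.rpow_le_rpow_of_nonpos (by linarith)
        (mnorm_le_of_abs_mul_add_le hq1.le hrows) (by linarith)

/-- `μ(x, 0) = 1` for a point `x` with irrational slope. -/
theorem stmt7 (x : Fin 2 → ℝ) (hx2 : x 1 ≠ 0) (hξ : Irrational (x 0 / x 1)) :
    IsLUB (muSet x 0) 1 := by
  have hx : x ≠ 0 := fun h => hx2 (congrFun h 1)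
  refine ⟨fun μ hμ => le_one_of_mem_muSet_zero hx hμ, fun b hb => le_of_forall_lt fun c hc => ?_⟩
  obtain ⟨μ, hμ, hμ1⟩ := exists_between (max_lt hc one_pos)
  exact ((le_max_left c 0).trans_lt hμ).trans_le
    (hb (mem_muSet_zero_of_irrational hx2 hξ ((le_max_right c 0).trans_lt hμ) hμ1))
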